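/- arXiv:1508.05867 — 3 statements merged into one kernel-verified Lean document; each statement's English description precedes it below -/
import Mathlib

section
/- Gabelbarkeitssatz (Carnap, Untersuchungen): Let Iso : α → α → Prop be an equivalence relation and let f : α → Prop be a satisfiable axiom system. Then f is monomorphic if and only if f is non-forkable. -/
/-- Gabelbarkeitssatz (Carnap, Untersuchungen): a satisfiable axiom system is
monomorphic iff it is non-forkable, where `Iso` is an equivalence relation. -/
theorem gabelbarkeitssatz {α : Type*} (Iso : α → α → Prop)
    (hrefl : ∀ P, Iso P P) (hsymm : ∀ P Q, Iso P Q → Iso Q P)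
    (htrans : ∀ P Q R, Iso P Q → Iso Q R → Iso P R)
    (f : α → Prop) (hsat : ∃ R, f R) :
    ((∃ R, f R) ∧ ∀ P Q, f P → f Q → Iso P Q) ↔
      ¬ (∃ g : α → Prop, (∀ P Q, g P → Iso P Q → g Q) ∧
          (∃ P, f P ∧ g P) ∧ (∃ Q, f Q ∧ ¬ g Q)) := by
  constructor
  · rintro ⟨-, hmono⟩ ⟨g, hform, ⟨P, hfP, hgP⟩, ⟨Q, hfQ, hgQ⟩⟩
    exact hgQ (hform P Q hgP (hmono P Q hfP hfQ))
  · intro hnf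
    refine ⟨hsat, fun P Q hfP hfQ => ?_⟩
    by_contra hiso
    exact hnf ⟨Iso P, fun A B hA hAB => htrans P A B hA hAB,
      ⟨P, hfP, hrefl P⟩, ⟨Q, hfQ, hiso⟩⟩
end

section
/- Monomorphicity is equivalent to a-decidability (Carnap): Let Iso : α → α → Prop be an equivalence relation and let f : α → Prop be a satisfiable axiom system. Then f is monomorphic if and only if for every formal g : α → Prop, either (∀ R, f R → g R) or (∀ R, f R → ¬ g R). -/
/-- Monomorphicity is equivalent to a-decidability (Carnap), for a satisfiable
axiom system `f` and an equivalence relation `Iso`. -/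
theorem monomorphic_iff_decidable {α : Type*} (Iso : α → α → Prop)
    (hrefl : ∀ P, Iso P P) (hsymm : ∀ P Q, Iso P Q → Iso Q P)
    (htrans : ∀ P Q R, Iso P Q → Iso Q R → Iso P R)
    (f : α → Prop) (hsat : ∃ R, f R) :
    ((∃ R, f R) ∧ ∀ P Q, f P → f Q → Iso P Q) ↔
      (∀ g : α → Prop, (∀ P Q, g P → Iso P Q → g Q) →
        ((∀ R, f R → g R) ∨ (∀ R, f R → ¬ g R))) := by
  obtain ⟨R0, hR0⟩ := hsat
  constructor
  · rintro ⟨-, hmono⟩ g hg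
    by_cases h : g R0
    · exact Or.inl fun R hR => hg _ _ h (hmono _ _ hR0 hR)
    · exact Or.inr fun R hR hgR => h (hg _ _ hgR (hmono _ _ hR hR0))
  · intro hdec
    refine ⟨⟨R0, hR0⟩, ?_⟩
    have := hdec (fun P => Iso R0 P) (fun P Q hP hPQ => htrans _ _ _ hP hPQ)
    rcases this with h | h
    · exact fun P Q hP hQ => htrans _ _ _ (hsymm _ _ (h P hP)) (h Q hQ)
    · exact fun P _ hP _ => absurd (hrefl R0) (h R0 hR0)
end

section
/- Formal sentences holding in one model of a monomorphic system are consequences: Let Iso : α → α → Prop be any binary relation, let f : α → Prop be an axiom system all of whose models are pairwise Iso-related (∀ P Q, f P → f Q → Iso P Q), and let g : α → Prop be formal. If g holds in some model of f (∃ R, f R ∧ g R), then g is a consequence of f (∀ Q, f Q → g Q). -/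
/-- A formal sentence holding in some model of an axiom system all of whose
models are pairwise Iso-related is a consequence of the system. -/
theorem formal_holds_consequence {α : Type*} (Iso : α → α → Prop)
    (f : α → Prop) (hmono : ∀ P Q, f P → f Q → Iso P Q)
    (g : α → Prop) (hformal : ∀ P Q, g P → Iso P Q → g Q)
    (hholds : ∃ R, f R ∧ g R) :
    ∀ Q, f Q → g Q := by
  obtain ⟨R, hR, hgR⟩ := hholds
  exact fun Q hQ => hformal R Q hgR (hmono R Q hR hQ)
end
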